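/- Let a, b be real numbers with b > 0 and a·b ≥ 1/4. Then for all natural numbers k and l, D(l + k) ≤ b^(2^k − 1) · D(l)^(2^k) · (1 + a/(b · D(l)²))^(2^k − 1). -/

import Mathlib

/-!
Put `r = D(l+1) / D(l)`. Since `b·D(l)²·(1 + a/(b·D(l)²)) = D(l+1)`, the right-hand side equals
`D(l) · r^(2^k - 1)`. The condition `a·b ≥ 1/4` makes `x ≤ a + b·x²` for every `x`, so `D` is
nondecreasing, `D ≥ 1` and `r ≥ 1`. The bound `B_k = D(l)·r^(2^k - 1)` then propagates through
`x ↦ a + b·x²`: `B_{k+1} = r·B_k²/D(l) = b·B_k² + a·(B_k/D(l))² ≥ a + b·B_k²`.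
-/

theorem le_add_mul_sq_of_quarter_le {a b : ℝ} (hb : 0 < b) (hab : 1 / 4 ≤ a * b) (x : ℝ) :
    x ≤ a + b * x ^ 2 := by
  nlinarith [sq_nonneg (2 * b * x - 1)]

theorem two_pow_succ_sub_one (k : ℕ) : 2 ^ (k + 1) - 1 = 2 * (2 ^ k - 1) + 1 := by
  have := Nat.one_le_two_pow (n := k)
  rw [pow_succ]
  omega

theorem le_mul_div_pow_of_quadratic_rec {a b : ℝ} {u : ℕ → ℝ} (ha : 0 ≤ a) (hb : 0 ≤ b)
    (hu : ∀ n, u (n + 1) = a + b * u n ^ 2) (h0 : 0 < u 0) (h01 : u 0 ≤ u 1) (k : ℕ) :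
    u k ≤ u 0 * (u 1 / u 0) ^ (2 ^ k - 1) := by
  set r := u 1 / u 0 with hr
  have hr1 : 1 ≤ r := (one_le_div h0).mpr h01
  have hu1 : a + b * u 0 ^ 2 = u 0 * r := by rw [← hu, hr, mul_div_cancel₀ _ h0.ne']
  have hnonneg : ∀ n, 0 ≤ u n := by
    rintro (_ | n)
    · exact h0.le
    · rw [hu]; positivity
  induction k with
  | zero => simp
  | succ k ih =>
    set B := u 0 * r ^ (2 ^ k - 1)
    have hB : u 0 ≤ B := le_mul_of_one_le_right h0.le (one_le_pow₀ hr1)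
    have hsq : u k ^ 2 ≤ B ^ 2 := pow_le_pow_left₀ (hnonneg k) ih 2
    have hratio : 1 ≤ (B / u 0) ^ 2 := one_le_pow₀ ((one_le_div h0).mpr hB)
    have hnext : u 0 * r ^ (2 ^ (k + 1) - 1) = b * B ^ 2 + a * (B / u 0) ^ 2 := by
      have : u 0 * r ^ (2 ^ (k + 1) - 1) = B ^ 2 * (u 0 * r) / u 0 ^ 2 := by
        rw [two_pow_succ_sub_one]; field_simp; ring
      rw [this, ← hu1]; field_simp; ring
    rw [hu, hnext]
    linarith [mul_le_mul_of_nonneg_left hsq hb, le_mul_of_one_le_right ha hratio]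

theorem stmt_3 (a b : ℝ) (hb : 0 < b) (hab : a * b ≥ 1/4)
    (D : ℕ → ℝ) (hD0 : D 0 = 1) (hD : ∀ n, D (n + 1) = a + b * D n ^ 2) :
    ∀ k l : ℕ,
      D (l + k) ≤ b ^ (2 ^ k - 1) * D l ^ (2 ^ k) * (1 + a / (b * D l ^ 2)) ^ (2 ^ k - 1) := by
  intro k l
  have ha : 0 ≤ a := by nlinarith
  have hmono : Monotone D := monotone_nat_of_le_succ fun n => by
    rw [hD]; exact le_add_mul_sq_of_quarter_le hb hab _
  have hpos : 0 < D l := by linarith [hD0 ▸ hmono (Nat.zero_le l)]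
  have hratio : D (l + 1) / D l = b * D l * (1 + a / (b * D l ^ 2)) := by
    rw [hD]; field_simp; ring
  have hbound := le_mul_div_pow_of_quadratic_rec (u := fun n => D (l + n)) ha hb.le
    (fun n => hD (l + n)) hpos (hmono (Nat.le_succ l)) k
  simp only [add_zero, hratio] at hbound
  obtain ⟨m, hm⟩ : ∃ m, 2 ^ k = m + 1 := Nat.exists_eq_add_one.mpr (Nat.two_pow_pos k)
  rw [hm, Nat.add_sub_cancel] at hbound ⊢
  calc D (l + k) ≤ D l * (b * D l * (1 + a / (b * D l ^ 2))) ^ m := hbound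
    _ = b ^ m * D l ^ (m + 1) * (1 + a / (b * D l ^ 2)) ^ m := by
      rw [mul_pow, mul_pow]; ring
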